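/- If n satisfies C(n,k) · (1 − 2^{-k})^{n−k} < 1, then there exists a tournament on n vertices with property S_k. -/

import Mathlib

/-- A tournament: an irreflexive, asymmetric, total relation. -/
def IsTournament {V : Type*} (T : V → V → Prop) : Prop :=
  (∀ v, ¬ T v v) ∧ (∀ u v, T u v → ¬ T v u) ∧ (∀ u v, u ≠ v → T u v ∨ T v u)

/-- Schütte's property `S_k` for a single tournament: every `k`-set of
vertices is dominated by some vertex. -/
def HasSk {V : Type*} (T : V → V → Prop) (k : ℕ) : Prop :=
  ∀ U : Finset V, U.card = k → ∃ v, ∀ u ∈ U, T v u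

/-- Schütte's property `S_k` for a family of tournaments on a common vertex
set: every `k`-set of vertices is dominated by some vertex in some member. -/
def FamilyHasSk {V : Type*} {m : ℕ} (T : Fin m → V → V → Prop) (k : ℕ) : Prop :=
  ∀ U : Finset V, U.card = k → ∃ i v, ∀ u ∈ U, T i v u

/-- There exists an `S_k` set of `m` tournaments on `n` vertices. -/
def HasSkFamily (n m k : ℕ) : Prop :=
  ∃ T : Fin m → Fin n → Fin n → Prop, (∀ i, IsTournament (T i)) ∧ FamilyHasSk T k

/-- `fmk m k` is the minimum order of an `S_k` set of `m` tournaments. -/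
noncomputable def fmk (m k : ℕ) : ℕ := sInf {n | HasSkFamily n m k}

namespace Stmt6Aux

open Finset

/-- The tournament relation associated to a choice of edge orientations. -/
def TofG {n : ℕ} (g : Fin n → Fin n → Bool) (u v : Fin n) : Prop :=
  (u < v ∧ g u v = true) ∨ (v < u ∧ g v u = false)

lemma tournament_TofG {n : ℕ} (g : Fin n → Fin n → Bool) : IsTournament (TofG g) := by
  refine ⟨?_, ?_, ?_⟩
  · rintro v (⟨h, _⟩ | ⟨h, _⟩) <;> exact lt_irrefl _ h
  · rintro u v (⟨h1, h2⟩ | ⟨h1, h2⟩) (⟨h3, h4⟩ | ⟨h3, h4⟩)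
    · exact absurd h3 (asymm h1)
    · simp [h2] at h4
    · simp [h2] at h4
    · exact absurd h3 (asymm h1)
  · intro u v huv
    rcases lt_trichotomy u v with h | h | h
    · cases hg : g u v
      · exact Or.inr (Or.inr ⟨h, hg⟩)
      · exact Or.inl (Or.inl ⟨h, hg⟩)
    · exact absurd h huv
    · cases hg : g v u
      · exact Or.inl (Or.inr ⟨h, hg⟩)
      · exact Or.inr (Or.inl ⟨h, hg⟩)

/-- The set of orientations for which no vertex outside `U` dominates `U`. -/
noncomputable def badSet {n : ℕ} (U : Finset (Fin n)) : Finset (Fin n → Fin n → Bool) :=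
  @Finset.filter _ (fun g => ∀ v ∉ U, ¬ ∀ u ∈ U, TofG g v u)
    (Classical.decPred _) Finset.univ

lemma mem_badSet {n : ℕ} (U : Finset (Fin n)) (g : Fin n → Fin n → Bool) :
    g ∈ badSet U ↔ ∀ v ∉ U, ¬ ∀ u ∈ U, TofG g v u := by
  simp [badSet, Finset.mem_filter]

/-- Counting lemma. -/
lemma count_bad {n : ℕ} (U : Finset (Fin n)) :
    (badSet U).card * (2 ^ U.card) ^ (n - U.card)
      = (2 ^ U.card - 1) ^ (n - U.card) * Fintype.card (Fin n → Fin n → Bool) := by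
  classical
  set A := {v : Fin n // v ∉ U} with hA
  set B := {u : Fin n // u ∈ U} with hB
  have cardA : Fintype.card A = n - U.card := by
    have h1 : Fintype.card {v : Fin n // ¬ v ∈ U} = n - U.card := by
      simp [Fintype.card_subtype_compl]
    exact h1
  have cardB : Fintype.card B = U.card := Fintype.card_coe U
  -- the coordinate map
  set φ : A × B → Fin n × Fin n := fun p =>
    if (p.1 : Fin n) < (p.2 : Fin n) then ((p.1 : Fin n), (p.2 : Fin n))
    else ((p.2 : Fin n), (p.1 : Fin n)) with hφ
  have hinj : Function.Injective φ := by
    rintro ⟨⟨a, ha⟩, ⟨b, hb⟩⟩ ⟨⟨a', ha'⟩, ⟨b', hb'⟩⟩ h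
    simp only [hφ] at h
    split_ifs at h with h1 h2 h2 <;>
      simp only [Prod.mk.injEq] at h <;> obtain ⟨h3, h4⟩ := h
    · simp [h3, h4]
    · exact absurd hb' (h3 ▸ ha)
    · exact absurd hb (h3.symm ▸ ha')
    · simp [h3, h4]
  set R := {c : Fin n × Fin n // c ∉ Set.range φ} with hR
  set e : (Fin n → Fin n → Bool) ≃ ((A → B → Bool) × (R → Bool)) :=
    (Equiv.curry _ _ _).symm.trans
      ((Equiv.piEquivPiSubtypeProd (· ∈ Set.range φ) (fun _ => Bool)).trans
        (Equiv.prodCongr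
          ((((Equiv.ofInjective φ hinj).arrowCongr (Equiv.refl Bool)).symm).trans
            (Equiv.curry _ _ _))
          (Equiv.refl _))) with he
  have hF : ∀ (g : Fin n → Fin n → Bool) (a : A) (b : B),
      (e g).1 a b = g (φ (a, b)).1 (φ (a, b)).2 := fun g a b => rfl
  set pfun : A → B → Bool := fun a b => decide ((a : Fin n) < (b : Fin n)) with hpfun
  have hDom : ∀ (g : Fin n → Fin n → Bool) (a : A),
      (e g).1 a = pfun a ↔ ∀ u ∈ U, TofG g (a : Fin n) u := by
    intro g a
    constructor
    · intro hfa u hu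
      have h := congrFun hfa ⟨u, hu⟩
      rw [hF] at h
      rcases lt_trichotomy (a : Fin n) u with hlt | heq | hgt
      · rw [hφ] at h
        simp only [if_pos hlt] at h
        simp only [hpfun, decide_eq_true_eq] at h
        left
        exact ⟨hlt, by simpa [hlt] using h⟩
      · exact absurd (heq ▸ hu) a.2
      · rw [hφ] at h
        simp only [if_neg (asymm hgt)] at h
        right
        refine ⟨hgt, ?_⟩
        simpa [hpfun, asymm hgt] using h
    · intro hdom
      funext b
      have h := hdom (b : Fin n) b.2
      rw [hF]
      rcases h with ⟨hlt, hg⟩ | ⟨hlt, hg⟩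
      · rw [hφ]; simp only [if_pos hlt]
        simp [hpfun, hlt, hg]
      · rw [hφ]; simp only [if_neg (asymm hlt)]
        simp [hpfun, asymm hlt, hg, not_lt_of_gt hlt]
  have badiff : ∀ g : Fin n → Fin n → Bool,
      (∀ v ∉ U, ¬ ∀ u ∈ U, TofG g v u) ↔ ∀ a : A, (e g).1 a ≠ pfun a := by
    intro g
    constructor
    · intro hg a hfa
      exact hg a a.2 ((hDom g a).mp hfa)
    · intro hg v hv hd
      exact hg ⟨v, hv⟩ ((hDom g ⟨v, hv⟩).mpr hd)
  have c1 : (badSet U).card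
      = Fintype.card {g : Fin n → Fin n → Bool // ∀ v ∉ U, ¬ ∀ u ∈ U, TofG g v u} := by
    rw [badSet, Finset.filter_congr_decidable, Fintype.card_subtype]
  have e2 : {g : Fin n → Fin n → Bool // ∀ v ∉ U, ¬ ∀ u ∈ U, TofG g v u}
      ≃ {x : (A → B → Bool) × (R → Bool) // ∀ a : A, x.1 a ≠ pfun a} :=
    e.subtypeEquiv (fun g => badiff g)
  have e3 : {x : (A → B → Bool) × (R → Bool) // ∀ a : A, x.1 a ≠ pfun a}
      ≃ {F : A → B → Bool // ∀ a : A, F a ≠ pfun a} × (R → Bool) :=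
    Equiv.prodSubtypeFstEquivSubtypeProd
      (p := fun F : A → B → Bool => ∀ a : A, F a ≠ pfun a)
  have e4 : {F : A → B → Bool // ∀ a : A, F a ≠ pfun a}
      ≃ ∀ a : A, {f : B → Bool // f ≠ pfun a} :=
    Equiv.subtypePiEquivPi (p := fun (a : A) (f : B → Bool) => f ≠ pfun a)
  have cfib : ∀ a : A, Fintype.card {f : B → Bool // f ≠ pfun a} = 2 ^ U.card - 1 := by
    intro a
    have h1 : Fintype.card {f : B → Bool // ¬ f = pfun a}
        = Fintype.card (B → Bool) - Fintype.card {f : B → Bool // f = pfun a} :=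
      Fintype.card_subtype_compl _
    simpa [Fintype.card_fun, cardB, Fintype.card_subtype_eq] using h1
  have ccount : Fintype.card {g : Fin n → Fin n → Bool // ∀ v ∉ U, ¬ ∀ u ∈ U, TofG g v u}
      = (2 ^ U.card - 1) ^ (n - U.card) * Fintype.card (R → Bool) := by
    rw [Fintype.card_congr (e2.trans e3), Fintype.card_prod, Fintype.card_congr e4,
      Fintype.card_pi]
    simp [cfib, Finset.prod_const, Finset.card_univ, cardA]
  have cΩ : Fintype.card (Fin n → Fin n → Bool)
      = (2 ^ U.card) ^ (n - U.card) * Fintype.card (R → Bool) := by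
    rw [Fintype.card_congr e, Fintype.card_prod, Fintype.card_fun]
    congr 1
    simp [cardA, cardB]
  rw [c1, ccount, cΩ]
  ring

end Stmt6Aux

/-- Erdős's probabilistic bound: if `C(n,k) * (1 - 2⁻ᵏ)^(n-k) < 1`, then
there exists a tournament on `n` vertices with property `S_k`. -/
theorem stmt6 (n k : ℕ)
    (h : (n.choose k : ℝ) * (1 - (1 / 2 : ℝ) ^ k) ^ (n - k) < 1) :
    ∃ T : Fin n → Fin n → Prop, IsTournament T ∧ HasSk T k := by
  classical
  open Stmt6Aux in
  -- Step 1: the natural-number form of the hypothesis.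
  have h2k : (0 : ℝ) < (2 : ℝ) ^ k := by positivity
  have hrw : (1 - (1 / 2 : ℝ) ^ k) = ((2 : ℝ) ^ k - 1) / 2 ^ k := by
    field_simp
    rw [sub_mul, ← mul_pow]; norm_num
  have hr : (n.choose k : ℝ) * ((2 : ℝ) ^ k - 1) ^ (n - k) < ((2 : ℝ) ^ k) ^ (n - k) := by
    have h' := h
    rw [hrw, div_pow, ← mul_div_assoc] at h'
    exact (div_lt_one (by positivity)).mp h'
  have hone : (1 : ℕ) ≤ 2 ^ k := Nat.one_le_two_pow
  have hcast : ((2 ^ k - 1 : ℕ) : ℝ) = (2 : ℝ) ^ k - 1 := by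
    push_cast [hone]
    ring
  have hnat : n.choose k * (2 ^ k - 1) ^ (n - k) < (2 ^ k) ^ (n - k) := by
    rw [← Nat.cast_lt (α := ℝ)]
    push_cast [hcast]
    exact hr
  -- Step 2: counting.
  set S := Finset.powersetCard k (Finset.univ : Finset (Fin n)) with hS
  set Ω := Fintype.card (Fin n → Fin n → Bool) with hΩ
  have hΩpos : 0 < Ω := Fintype.card_pos
  have hsum : (∑ U ∈ S, (badSet U).card) < Ω := by
    refine lt_of_mul_lt_mul_right ?_ (Nat.zero_le ((2 ^ k) ^ (n - k)))
    calc (∑ U ∈ S, (badSet U).card) * (2 ^ k) ^ (n - k)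
        = ∑ U ∈ S, (badSet U).card * (2 ^ k) ^ (n - k) := Finset.sum_mul _ _ _
      _ = ∑ _U ∈ S, (2 ^ k - 1) ^ (n - k) * Ω := by
          refine Finset.sum_congr rfl fun U hU => ?_
          have hUc : U.card = k := (Finset.mem_powersetCard.mp hU).2
          have := count_bad U
          rw [hUc] at this
          exact this
      _ = S.card * ((2 ^ k - 1) ^ (n - k) * Ω) := by
          rw [Finset.sum_const, smul_eq_mul]
      _ = n.choose k * (2 ^ k - 1) ^ (n - k) * Ω := by
          rw [hS, Finset.card_powersetCard, Finset.card_univ, Fintype.card_fin, mul_assoc]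
      _ < (2 ^ k) ^ (n - k) * Ω := by
          exact Nat.mul_lt_mul_of_lt_of_le hnat le_rfl hΩpos
      _ = Ω * (2 ^ k) ^ (n - k) := Nat.mul_comm _ _
  have hex : ∃ g : Fin n → Fin n → Bool, ∀ U ∈ S, g ∉ badSet U := by
    by_contra hc
    push_neg at hc
    have hsub : (Finset.univ : Finset (Fin n → Fin n → Bool)) ⊆ S.biUnion badSet := by
      intro g _
      obtain ⟨U, hU, hg⟩ := hc g
      exact Finset.mem_biUnion.mpr ⟨U, hU, hg⟩
    have h1 := Finset.card_le_card hsub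
    have h2 := Finset.card_biUnion_le (s := S) (t := badSet)
    rw [Finset.card_univ] at h1
    omega
  obtain ⟨g, hg⟩ := hex
  refine ⟨TofG g, tournament_TofG g, ?_⟩
  intro U hU
  have hUS : U ∈ S := by
    rw [hS]
    exact Finset.mem_powersetCard_univ.mpr hU
  have hnb := hg U hUS
  rw [mem_badSet] at hnb
  push_neg at hnb
  obtain ⟨v, _, hdom⟩ := hnb
  exact ⟨v, hdom⟩
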